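/- For every 1 ≤ k ≤ p and all 1 ≤ i, j ≤ N: L_k(i,j) − L_{k−1}(i,j) = 1{ i, j ∈ (n_{k−1}, n_k] } · 1{i = j} + 1{ i ∈ (n_{k−1}, n_k], j ≤ n_{min{k−1, p−2}} } · B(i,j) + 1{ i > n_k, j ≤ n_k, k ≤ p−2 } · L_k(i,j) − 1{ i > n_{k−1}, j ≤ n_{k−1}, k ≤ p−1 } · L_{k−1}(i,j). -/

import Mathlib

open MeasureTheory ProbabilityTheory Complex
open scoped Real BigOperators Nat

noncomputable section

/-- Forward difference operator `∇f(x) = f(x+1) − f(x)`. -/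
def nab (f : ℤ → ℂ) : ℤ → ℂ := fun x => f (x + 1) - f x

/-- Inverse difference: `∇⁻¹f(x) = ∑_{y<x} f(y)` (a `tsum`; for functions vanishing
to the left of some integer this is the finite sum of the paper). -/
def nabInv (f : ℤ → ℂ) : ℤ → ℂ := fun x => ∑' y : {y : ℤ // y < x}, f y.1

/-- `∇^k` for `k : ℤ`. -/
def nabIter (k : ℤ) (f : ℤ → ℂ) : ℤ → ℂ :=
  if 0 ≤ k then nab^[k.toNat] f else nabInv^[(-k).toNat] f

/-- The negative binomial weight `w_m(x)`. -/
def wgt (q : ℝ) (m : ℕ) : ℤ → ℂ := fun x =>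
  if 0 ≤ x then ((x.toNat + m - 1).choose x.toNat : ℂ) * ((1 : ℂ) - (q : ℂ)) ^ m * (q : ℂ) ^ x
  else 0

/-- Component `x_k` (1-based) of a vector `x : Fin N → ℤ`. -/
def vcomp {N : ℕ} (x : Fin N → ℤ) (k : ℕ) : ℤ :=
  if h : k - 1 < N then x ⟨k - 1, h⟩ else 0

/-- 1-based access to a finite tuple, extended by `0` out of range. -/
def fext {d : ℕ} {α : Type*} [Zero α] (x : Fin d → α) : ℕ → α := fun k =>
  if h : 1 ≤ k ∧ k ≤ d then x ⟨k - 1, by omega⟩ else 0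

/-- The growth function `𝐆(m,n)` built from weights `w`. -/
def growth (w : ℕ → ℕ → ℕ) : ℕ → ℕ → ℕ
  | 0, _ => 0
  | _ + 1, 0 => 0
  | m + 1, n + 1 => max (growth w m (n + 1)) (growth w (m + 1) n) + w (m + 1) (n + 1)
  termination_by m n => m + n

/-- Normalized contour integral `(1/(2πi)) ∮_{|z−c|=R} f(z) dz` (counterclockwise circle). -/
def cint (c : ℂ) (R : ℝ) (f : ℂ → ℂ) : ℂ :=
  (2 * Real.pi * Complex.I)⁻¹ * (∮ z in C(c, R), f z)

/-- Iterated normalized contour integrals with centers `c` and radii `R`. -/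
def multiCintC : (k : ℕ) → (c : Fin k → ℂ) → (R : Fin k → ℝ) → ((Fin k → ℂ) → ℂ) → ℂ
  | 0, _, _, f => f ![]
  | k + 1, c, R, f =>
      cint (c 0) (R 0) fun z =>
        multiCintC k (fun t => c t.succ) (fun t => R t.succ) fun w => f (Fin.cons z w)

/-- `G*(w | n, m, a)`. -/
def Gstar (q : ℝ) (n m a : ℤ) (w : ℂ) : ℂ :=
  w ^ n * (1 - w) ^ (a + m) / (1 - w / (1 - (q : ℂ))) ^ m

/-- `G(w | n, m, a) = G*(w | n,m,a)/G*(1−√q | n,m,a)`. -/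
def Gfun (q : ℝ) (n m a : ℤ) (w : ℂ) : ℂ :=
  Gstar q n m a w / Gstar q n m a (1 - (Real.sqrt q : ℂ))

/-- The block index `r` such that `n_{r−1} < i ≤ n_r`. -/
def blockIdx (n : ℕ → ℕ) (i : ℕ) : ℕ := sInf {r : ℕ | i ≤ n r}

/-- `r* = min{r, p−1}` for the block of `i`. -/
def rstar (p : ℕ) (n : ℕ → ℕ) (i : ℕ) : ℕ := min (blockIdx n i) (p - 1)

/-- `m(i) = m_{r*}`. -/
def mOf (p : ℕ) (n m : ℕ → ℕ) (i : ℕ) : ℕ := m (rstar p n i)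

/-- `a(i) = a_{r*}`. -/
def aOf (p : ℕ) (n : ℕ → ℕ) (a : ℕ → ℤ) (i : ℕ) : ℤ := a (rstar p n i)

/-- `n(i) = n_{r*}`. -/
def nOf (p : ℕ) (n : ℕ → ℕ) (i : ℕ) : ℕ := n (rstar p n i)


/-- The kernel `L_k(i,j)` (Definition `def:Lk` of the paper), with `L_0 = 0`. -/
def Lker (q : ℝ) (p : ℕ) (n m : ℕ → ℕ) (a : ℕ → ℤ) (τ1 τ2 : ℝ) (k i j : ℕ) : ℂ :=
  if k = 0 then 0 else
    (1 - (Real.sqrt q : ℂ))⁻¹ *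
      cint 0 τ1 (fun ζ1 => cint 0 τ2 (fun ζ2 =>
        Gfun q ((n k : ℤ) - i) ((m k : ℤ) - mOf p n m i) (a k - aOf p n a i) ζ1
        / (Gfun q ((n k : ℤ) - j + 1) ((m k : ℤ) - mOf p n m j) (a k - aOf p n a j) ζ2
           * (ζ1 - ζ2))))

/-- The kernel `B(i,j)` of Lemma `lem:Lkhelper` of the paper. -/
def Bker (q : ℝ) (p : ℕ) (n m : ℕ → ℕ) (a : ℕ → ℤ) (τ : ℝ) (i j : ℕ) : ℂ :=
  (1 - (Real.sqrt q : ℂ))⁻¹ *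
    cint 0 τ (fun w =>
      (Gfun q ((i : ℤ) - j + 1) ((mOf p n m i : ℤ) - mOf p n m j)
        (aOf p n a i - aOf p n a j) w)⁻¹)

/-! For `k ≥ 1`, `L_k(i,j)` is a double contour integral, evaluated by three facts. If `j > n_k`,
the `ζ₂`-integrand is holomorphic inside `|ζ₂| = τ₁`, so `L_k(i,j) = 0`. If `i ≤ n_k`, Cauchy's
formula in `ζ₁` collapses it to the single integral defining `B(i,j)`, whose radius is irrelevant
since the integrand is holomorphic on a punctured disc. If `i > n_k` and `r*(i) = k`, the
`ζ₁`-integrand is a negative power of `ζ₁` over `ζ₁ - ζ₂`, whose residues at `0` and `ζ₂` cancel, so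
again `L_k(i,j) = 0`. Moreover `B(i,j) = 0` for `i < j` (holomorphic integrand) and
`B(i,j) = 1{i = j}` when `r*(i) = r*(j)` (residue of `w⁻¹`). The identity then follows by a case
distinction on the blocks `(n_{r-1}, n_r]` containing `i` and `j`. -/

open Metric Set

section GFunction

variable {q : ℝ} {z : ℂ}

lemma one_sub_ne_zero_of_norm_lt (hq : 0 ≤ q) (hz : ‖z‖ < 1 - q) : (1 : ℂ) - z ≠ 0 := by
  rw [sub_ne_zero]
  rintro rfl
  simp only [norm_one] at hz
  linarith

lemma one_sub_div_ne_zero_of_norm_lt (hz : ‖z‖ < 1 - q) : (1 : ℂ) - z / (1 - q) ≠ 0 := by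
  have hq : 0 < 1 - q := (norm_nonneg z).trans_lt hz
  have hq' : (1 : ℂ) - q ≠ 0 := by exact_mod_cast hq.ne'
  rw [sub_ne_zero, ne_comm, Ne, div_eq_one_iff_eq hq']
  rintro rfl
  rw [← ofReal_one, ← ofReal_sub, norm_real, Real.norm_of_nonneg hq.le] at hz
  exact lt_irrefl _ hz

lemma norm_one_sub_sqrt (hq1 : q ≤ 1) : ‖(1 : ℂ) - Real.sqrt q‖ = 1 - Real.sqrt q := by
  rw [← ofReal_one, ← ofReal_sub, norm_real, Real.norm_of_nonneg]
  simpa using Real.sqrt_le_one.mpr hq1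

lemma Real.sqrt_lt_one (hq1 : q < 1) : Real.sqrt q < 1 :=
  (Real.sqrt_lt' one_pos).mpr (by rwa [one_pow])

lemma one_sub_sqrt_ne_zero (hq1 : q < 1) : (1 : ℂ) - Real.sqrt q ≠ 0 := by
  rw [← ofReal_one, ← ofReal_sub, ofReal_ne_zero, sub_ne_zero, ne_comm]
  exact (Real.sqrt_lt_one hq1).ne

lemma one_sub_sqrt_lt (hq0 : 0 < q) (hq1 : q < 1) : 1 - Real.sqrt q < 1 - q := by
  nlinarith [Real.sq_sqrt hq0.le, Real.sqrt_lt_one hq1, Real.sqrt_pos.mpr hq0]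

lemma Gstar_mul (hz0 : z ≠ 0) (hz1 : (1 : ℂ) - z ≠ 0) (hzq : (1 : ℂ) - z / (1 - q) ≠ 0)
    (n₁ m₁ a₁ n₂ m₂ a₂ : ℤ) :
    Gstar q n₁ m₁ a₁ z * Gstar q n₂ m₂ a₂ z = Gstar q (n₁ + n₂) (m₁ + m₂) (a₁ + a₂) z := by
  simp only [Gstar, add_add_add_comm a₁, zpow_add₀ hz0, zpow_add₀ hz1, zpow_add₀ hzq]
  field_simp

lemma Gfun_mul (hq0 : 0 < q) (hq1 : q < 1) (hz0 : z ≠ 0) (hz : ‖z‖ < 1 - q)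
    (n₁ m₁ a₁ n₂ m₂ a₂ : ℤ) :
    Gfun q n₁ m₁ a₁ z * Gfun q n₂ m₂ a₂ z = Gfun q (n₁ + n₂) (m₁ + m₂) (a₁ + a₂) z := by
  have hw : ‖(1 : ℂ) - Real.sqrt q‖ < 1 - q :=
    (norm_one_sub_sqrt hq1.le).trans_lt (one_sub_sqrt_lt hq0 hq1)
  rw [Gfun, Gfun, div_mul_div_comm,
    Gstar_mul hz0 (one_sub_ne_zero_of_norm_lt hq0.le hz) (one_sub_div_ne_zero_of_norm_lt hz),
    Gstar_mul (one_sub_sqrt_ne_zero hq1) (one_sub_ne_zero_of_norm_lt hq0.le hw)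
      (one_sub_div_ne_zero_of_norm_lt hw), Gfun]

lemma Gfun_inv (q : ℝ) (n m a : ℤ) (z : ℂ) :
    (Gfun q n m a z)⁻¹ = Gfun q (-n) (-m) (-a) z := by
  simp only [Gfun, Gstar, ← neg_add, zpow_neg, div_eq_mul_inv, mul_inv, inv_inv]

lemma Gfun_zero_zero (q : ℝ) (d : ℤ) (z : ℂ) :
    Gfun q d 0 0 z = ((1 - Real.sqrt q : ℂ) ^ d)⁻¹ * z ^ d := by
  simp [Gfun, Gstar, div_eq_mul_inv, mul_comm]

lemma differentiableAt_Gfun (hq : 0 ≤ q) (hz : ‖z‖ < 1 - q) {n : ℤ} (hn : z ≠ 0 ∨ 0 ≤ n)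
    (m a : ℤ) : DifferentiableAt ℂ (Gfun q n m a) z := by
  have h1 := one_sub_ne_zero_of_norm_lt hq hz
  have h2 := one_sub_div_ne_zero_of_norm_lt hz
  have hnum : DifferentiableAt ℂ (fun w : ℂ => w ^ n * (1 - w) ^ (a + m)) z :=
    (differentiableAt_zpow.mpr hn).mul ((differentiableAt_id.const_sub 1).zpow (Or.inl h1))
  have hden : DifferentiableAt ℂ (fun w : ℂ => (1 - w / (1 - (q : ℂ))) ^ m) z :=
    ((differentiableAt_id.div_const _).const_sub 1).zpow (Or.inl h2)
  exact (hnum.div hden (zpow_ne_zero _ h2)).div_const _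

lemma differentiableOn_Gfun (hq : 0 ≤ q) {n : ℤ} (hn : 0 ≤ n) (m a : ℤ) :
    DifferentiableOn ℂ (Gfun q n m a) (ball 0 (1 - q)) := fun _ hz =>
  (differentiableAt_Gfun hq (mem_ball_zero_iff.mp hz) (Or.inr hn) m a).differentiableWithinAt

lemma differentiableOn_Gfun_punctured (hq : 0 ≤ q) (n m a : ℤ) :
    DifferentiableOn ℂ (Gfun q n m a) (ball 0 (1 - q) \ {0}) := fun _ hz =>
  (differentiableAt_Gfun hq (mem_ball_zero_iff.mp hz.1) (Or.inl hz.2) m a).differentiableWithinAt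

lemma continuousOn_Gfun_sphere (hq : 0 ≤ q) {r : ℝ} (hr0 : 0 < r) (hr : r < 1 - q) (n m a : ℤ) :
    ContinuousOn (Gfun q n m a) (sphere 0 r) := by
  refine (differentiableOn_Gfun_punctured hq n m a).continuousOn.mono fun z hz => ⟨?_, ?_⟩
  · rw [mem_ball_zero_iff, mem_sphere_zero_iff_norm.mp hz]; exact hr
  · exact ne_zero_of_mem_sphere hr0.ne' ⟨z, hz⟩

end GFunction

section ContourIntegral

variable {c w : ℂ} {R r r' : ℝ} {f g : ℂ → ℂ}

lemma cint_congr (hR : 0 ≤ R) (h : EqOn f g (sphere c R)) : cint c R f = cint c R g := by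
  rw [cint, cint, circleIntegral.integral_congr hR h]

lemma cint_eq_zero_of_eqOn (hR : 0 ≤ R) (h : EqOn f 0 (sphere c R)) : cint c R f = 0 := by
  rw [cint_congr hR h]
  simp [cint, circleIntegral]

lemma cint_const_mul (a : ℂ) (f : ℂ → ℂ) : cint c R (fun z => a * f z) = a * cint c R f := by
  rw [cint, cint, circleIntegral.integral_const_mul, mul_left_comm]

lemma cint_sub (hf : CircleIntegrable f c R) (hg : CircleIntegrable g c R) :
    cint c R (fun z => f z - g z) = cint c R f - cint c R g := by
  rw [cint, cint, cint, circleIntegral.integral_sub hf hg, mul_sub]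

lemma cint_eq_zero_of_differentiableOn (hr : 0 ≤ r) (hrR : r < R)
    (hf : DifferentiableOn ℂ f (ball c R)) : cint c r f = 0 := by
  rw [cint, circleIntegral_eq_zero_of_differentiable_on_off_countable hr countable_empty
    (hf.continuousOn.mono (closedBall_subset_ball hrR))
    (fun z hz => hf.differentiableAt (isOpen_ball.mem_nhds (ball_subset_ball hrR.le hz.1))),
    mul_zero]

lemma cint_sub_inv_mul (hf : DifferentiableOn ℂ f (closedBall c R)) (hw : w ∈ ball c R) :
    cint c R (fun z => (z - w)⁻¹ * f z) = f w :=
  (hf.mono closure_ball_subset_closedBall).diffContOnCl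
    |>.two_pi_i_inv_smul_circleIntegral_sub_inv_smul hw

lemma cint_sub_inv (hw : w ∈ ball c R) : cint c R (fun z => (z - w)⁻¹) = 1 := by
  rw [cint, circleIntegral.integral_sub_inv_of_mem_ball hw, inv_mul_cancel₀ two_pi_I_ne_zero]

lemma cint_zpow (hR : 0 < R) (d : ℤ) :
    cint 0 R (fun z => z ^ d) = if d = -1 then 1 else 0 := by
  split_ifs with hd
  · simpa [hd] using cint_sub_inv (mem_ball_self hR : (0 : ℂ) ∈ ball 0 R)
  · simpa [cint] using circleIntegral.integral_sub_zpow_of_ne hd 0 0 R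

lemma cint_eq_of_differentiableOn_punctured (hr : 0 < r) (hr' : 0 < r') (hrR : r < R)
    (hrR' : r' < R) (hf : DifferentiableOn ℂ f (ball c R \ {c})) : cint c r f = cint c r' f := by
  wlog hle : r ≤ r' generalizing r r'
  · exact (this hr' hr hrR' hrR (le_of_not_ge hle)).symm
  have hsub : closedBall c r' \ ball c r ⊆ ball c R \ {c} := fun z hz =>
    ⟨closedBall_subset_ball hrR' hz.1, fun hzc => hz.2 (hzc ▸ mem_ball_self hr)⟩
  rw [cint, cint, circleIntegral_eq_of_differentiable_on_annulus_off_countable hr hle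
    countable_empty (hf.continuousOn.mono hsub) fun z hz =>
      hf.differentiableAt ((isOpen_ball.sdiff isClosed_singleton).mem_nhds
        (hsub ⟨ball_subset_closedBall hz.1.1, fun h => hz.1.2 (ball_subset_closedBall h)⟩))]

lemma cint_comm {c' : ℂ} {s : ℝ} {F : ℂ → ℂ → ℂ}
    (hF : Continuous fun θ : ℝ × ℝ => F (circleMap c r θ.1) (circleMap c' s θ.2)) :
    cint c r (fun z => cint c' s (fun w => F z w))
      = cint c' s (fun w => cint c r (fun z => F z w)) := by
  simp only [cint, circleIntegral.integral_const_mul]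
  congr 1
  simp only [circleIntegral, deriv_circleMap, ← intervalIntegral.integral_smul]
  rw [intervalIntegral_intervalIntegral_swap]
  · simp only [smul_smul, mul_comm]
  · refine (ContinuousOn.integrableOn_compact (isCompact_uIcc.prod isCompact_uIcc) ?_).mono_set
      (prod_mono uIoc_subset_uIcc uIoc_subset_uIcc)
    refine Continuous.continuousOn ?_
    exact ((continuous_circleMap 0 r).comp continuous_fst |>.mul continuous_const).smul
      (((continuous_circleMap 0 s).comp continuous_snd |>.mul continuous_const).smul hF)

lemma cint_zpow_neg_mul_sub_inv (hR : 0 < R) (hw0 : w ≠ 0) (hwR : ‖w‖ < R) (ν : ℕ) :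
    cint 0 R (fun z => z ^ (-ν : ℤ) * (z - w)⁻¹) = if ν = 0 then 1 else 0 := by
  have hsphere : ∀ z ∈ sphere (0 : ℂ) R, z ≠ 0 ∧ z - w ≠ 0 := fun z hz => by
    refine ⟨ne_zero_of_mem_sphere hR.ne' ⟨z, hz⟩, sub_ne_zero.mpr ?_⟩
    rintro rfl
    exact hwR.ne (mem_sphere_zero_iff_norm.mp hz)
  induction ν with
  | zero => simpa using cint_sub_inv (mem_ball_zero_iff.mpr hwR)
  | succ ν ih =>
    have hpf : EqOn (fun z => z ^ (-(ν + 1 : ℕ) : ℤ) * (z - w)⁻¹)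
        (fun z => w⁻¹ * (z ^ (-ν : ℤ) * (z - w)⁻¹ - z ^ (-ν - 1 : ℤ))) (sphere 0 R) := by
      intro z hz
      obtain ⟨hz0, hzw⟩ := hsphere z hz
      simp only [Nat.cast_add, Nat.cast_one, neg_add, ← sub_eq_add_neg, zpow_sub₀ hz0, zpow_one]
      field_simp
      ring
    have hint₁ : CircleIntegrable (fun z => z ^ (-ν : ℤ) * (z - w)⁻¹) 0 R :=
      ContinuousOn.circleIntegrable hR.le fun z hz =>
        ((continuousAt_zpow₀ z _ (Or.inl (hsphere z hz).1)).mul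
          ((continuousAt_id.sub continuousAt_const).inv₀ (hsphere z hz).2)).continuousWithinAt
    have hint₂ : CircleIntegrable (fun z => z ^ (-ν - 1 : ℤ)) 0 R :=
      ContinuousOn.circleIntegrable hR.le fun z hz =>
        (continuousAt_zpow₀ z _ (Or.inl (hsphere z hz).1)).continuousWithinAt
    rw [cint_congr hR.le hpf, cint_const_mul, cint_sub hint₁ hint₂, ih, cint_zpow hR]
    simp

lemma cint_cint_mul_sub_inv {τ₁ τ₂ : ℝ} (h2 : 0 < τ₂) (h21 : τ₂ < τ₁) {A B : ℂ → ℂ}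
    (hA : ContinuousOn A (sphere 0 τ₁)) (hB : ContinuousOn B (sphere 0 τ₂)) :
    cint 0 τ₁ (fun z => cint 0 τ₂ (fun w => A z * B w * (z - w)⁻¹))
      = cint 0 τ₂ (fun w => B w * cint 0 τ₁ (fun z => A z * (z - w)⁻¹)) := by
  have h1 : 0 < τ₁ := h2.trans h21
  have hne : ∀ θ₁ θ₂, circleMap 0 τ₁ θ₁ - circleMap 0 τ₂ θ₂ ≠ 0 := fun θ₁ θ₂ h => by
    have := congrArg norm (sub_eq_zero.mp h)
    rw [norm_circleMap_zero, norm_circleMap_zero, abs_of_pos h1, abs_of_pos h2] at this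
    exact h21.ne' this
  have hc₁ := (continuous_circleMap 0 τ₁).comp (continuous_fst (X := ℝ) (Y := ℝ))
  have hc₂ := (continuous_circleMap 0 τ₂).comp (continuous_snd (X := ℝ) (Y := ℝ))
  rw [cint_comm (((hA.comp_continuous hc₁ fun θ => circleMap_mem_sphere 0 h1.le θ.1).mul
    (hB.comp_continuous hc₂ fun θ => circleMap_mem_sphere 0 h2.le θ.2)).mul
    ((hc₁.sub hc₂).inv₀ fun θ => hne θ.1 θ.2))]
  refine cint_congr h2.le fun w _ => ?_
  rw [← cint_const_mul]
  simp only [mul_assoc, mul_left_comm (B w)]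

end ContourIntegral

section GContour

variable {q r r' τ₁ τ₂ : ℝ}

lemma cint_Gfun_eq_zero (hq : 0 ≤ q) (hr : 0 ≤ r) (hr1 : r < 1 - q) {d : ℤ} (hd : 0 ≤ d)
    (m a : ℤ) : cint 0 r (Gfun q d m a) = 0 :=
  cint_eq_zero_of_differentiableOn hr hr1 (differentiableOn_Gfun hq hd m a)

lemma cint_Gfun_zero_zero (hr : 0 < r) (d : ℤ) :
    cint 0 r (Gfun q d 0 0) = if d = -1 then (1 - Real.sqrt q : ℂ) else 0 := by
  simp only [funext (Gfun_zero_zero q d), cint_const_mul, cint_zpow hr]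
  split_ifs with hd <;> simp [hd]

lemma cint_Gfun_eq_of_radius (hq : 0 ≤ q) (hr : 0 < r) (hr' : 0 < r') (hr1 : r < 1 - q)
    (hr1' : r' < 1 - q) (d m a : ℤ) : cint 0 r (Gfun q d m a) = cint 0 r' (Gfun q d m a) :=
  cint_eq_of_differentiableOn_punctured hr hr' hr1 hr1' (differentiableOn_Gfun_punctured hq d m a)

/-- The double contour integral of `L_k(i,j)`, with the three exponents of each `G` free. -/
def Gdouble (q τ₁ τ₂ : ℝ) (n₁ m₁ a₁ n₂ m₂ a₂ : ℤ) : ℂ :=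
  cint 0 τ₁ fun ζ₁ => cint 0 τ₂ fun ζ₂ => Gfun q n₁ m₁ a₁ ζ₁ / (Gfun q n₂ m₂ a₂ ζ₂ * (ζ₁ - ζ₂))

lemma Gfun_div_mul_sub (n₁ m₁ a₁ n₂ m₂ a₂ : ℤ) (z w : ℂ) :
    Gfun q n₁ m₁ a₁ z / (Gfun q n₂ m₂ a₂ w * (z - w))
      = Gfun q n₁ m₁ a₁ z * Gfun q (-n₂) (-m₂) (-a₂) w * (z - w)⁻¹ := by
  rw [div_eq_mul_inv, mul_inv, ← Gfun_inv, mul_assoc]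

/-- For fixed `ζ₁`, the `ζ₂`-integrand is holomorphic inside the circle `|ζ₂| = τ₁`. -/
lemma Gdouble_eq_zero_of_nonpos (hq : 0 ≤ q) (h2 : 0 ≤ τ₂) (h21 : τ₂ < τ₁) (h1 : τ₁ < 1 - q)
    (n₁ m₁ a₁ : ℤ) {n₂ : ℤ} (hn₂ : n₂ ≤ 0) (m₂ a₂ : ℤ) :
    Gdouble q τ₁ τ₂ n₁ m₁ a₁ n₂ m₂ a₂ = 0 := by
  have hinner : EqOn
      (fun z => cint 0 τ₂ fun w => Gfun q n₁ m₁ a₁ z / (Gfun q n₂ m₂ a₂ w * (z - w)))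
      0 (sphere 0 τ₁) := fun z hz => by
    simp only [Gfun_div_mul_sub]
    refine cint_eq_zero_of_differentiableOn h2 h21 fun w hw => ?_
    have hw' : ‖w‖ < τ₁ := mem_ball_zero_iff.mp hw
    have hzw : z - w ≠ 0 := by
      rw [sub_ne_zero]; rintro rfl; exact hw'.ne (mem_sphere_zero_iff_norm.mp hz)
    exact (((differentiableAt_Gfun hq (hw'.trans h1) (Or.inr (neg_nonneg.mpr hn₂)) _ _).const_mul
      _).mul ((differentiableAt_const z |>.sub differentiableAt_id).inv hzw)).differentiableWithinAt
  exact cint_eq_zero_of_eqOn (h2.trans_lt h21).le hinner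

lemma Gdouble_eq_cint_swap (hq : 0 ≤ q) (h2 : 0 < τ₂) (h21 : τ₂ < τ₁) (h1 : τ₁ < 1 - q)
    (n₁ m₁ a₁ n₂ m₂ a₂ : ℤ) :
    Gdouble q τ₁ τ₂ n₁ m₁ a₁ n₂ m₂ a₂
      = cint 0 τ₂ fun w =>
          Gfun q (-n₂) (-m₂) (-a₂) w * cint 0 τ₁ fun z => Gfun q n₁ m₁ a₁ z * (z - w)⁻¹ := by
  simp only [Gdouble, Gfun_div_mul_sub]
  exact cint_cint_mul_sub_inv h2 h21 (continuousOn_Gfun_sphere hq (h2.trans h21) h1 _ _ _)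
    (continuousOn_Gfun_sphere hq h2 (h21.trans h1) _ _ _)

/-- Cauchy's formula in `ζ₁`. -/
lemma Gdouble_eq_cint_of_nonneg (hq0 : 0 < q) (hq1 : q < 1) (h2 : 0 < τ₂) (h21 : τ₂ < τ₁)
    (h1 : τ₁ < 1 - q) {n₁ : ℤ} (hn₁ : 0 ≤ n₁) (m₁ a₁ n₂ m₂ a₂ : ℤ) :
    Gdouble q τ₁ τ₂ n₁ m₁ a₁ n₂ m₂ a₂ = cint 0 τ₂ (Gfun q (n₁ - n₂) (m₁ - m₂) (a₁ - a₂)) := by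
  rw [Gdouble_eq_cint_swap hq0.le h2 h21 h1]
  refine cint_congr h2.le fun w hw => ?_
  have hw' : ‖w‖ = τ₂ := mem_sphere_zero_iff_norm.mp hw
  have hcauchy : cint 0 τ₁ (fun z => Gfun q n₁ m₁ a₁ z * (z - w)⁻¹) = Gfun q n₁ m₁ a₁ w := by
    simp only [mul_comm (Gfun q n₁ m₁ a₁ _)]
    exact cint_sub_inv_mul ((differentiableOn_Gfun hq0.le hn₁ m₁ a₁).mono
      (closedBall_subset_ball h1)) (mem_ball_zero_iff.mpr (hw' ▸ h21))
  rw [hcauchy, Gfun_mul hq0 hq1 (ne_zero_of_mem_sphere h2.ne' ⟨w, hw⟩) (hw' ▸ h21.trans h1)]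
  simp only [sub_eq_neg_add]

/-- The residues at `ζ₁ = 0` and `ζ₁ = ζ₂` cancel. -/
lemma Gdouble_zero_zero_eq_zero (hq : 0 ≤ q) (h2 : 0 < τ₂) (h21 : τ₂ < τ₁) (h1 : τ₁ < 1 - q)
    {n₁ : ℤ} (hn₁ : n₁ < 0) (n₂ m₂ a₂ : ℤ) : Gdouble q τ₁ τ₂ n₁ 0 0 n₂ m₂ a₂ = 0 := by
  obtain ⟨ν, rfl⟩ : ∃ ν : ℕ, n₁ = -ν := ⟨n₁.natAbs, by omega⟩
  rw [Gdouble_eq_cint_swap hq h2 h21 h1]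
  have hinner : EqOn (fun w => Gfun q (-n₂) (-m₂) (-a₂) w
      * cint 0 τ₁ fun z => Gfun q (-ν) 0 0 z * (z - w)⁻¹) 0 (sphere 0 τ₂) :=
    fun w hw => by
      have hw' : ‖w‖ = τ₂ := mem_sphere_zero_iff_norm.mp hw
      simp only [Gfun_zero_zero, mul_assoc, cint_const_mul,
        cint_zpow_neg_mul_sub_inv (h2.trans h21) (ne_zero_of_mem_sphere h2.ne' ⟨w, hw⟩)
          (hw' ▸ h21), if_neg (show ν ≠ 0 by omega), mul_zero, Pi.zero_apply]
  exact cint_eq_zero_of_eqOn h2.le hinner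

end GContour

section Kernels

variable {q : ℝ} {p : ℕ} {n m : ℕ → ℕ} {a : ℕ → ℤ} {τ₁ τ₂ τ : ℝ} {k i j : ℕ}

lemma Lker_eq (hk : k ≠ 0) :
    Lker q p n m a τ₁ τ₂ k i j = (1 - Real.sqrt q : ℂ)⁻¹ *
      Gdouble q τ₁ τ₂ (n k - i) (m k - mOf p n m i) (a k - aOf p n a i)
        (n k - j + 1) (m k - mOf p n m j) (a k - aOf p n a j) :=
  if_neg hk

lemma Bker_eq : Bker q p n m a τ i j = (1 - Real.sqrt q : ℂ)⁻¹ *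
    cint 0 τ (Gfun q (j - i - 1) (mOf p n m j - mOf p n m i) (aOf p n a j - aOf p n a i)) := by
  simp only [Bker, Gfun_inv]
  congr 2
  funext w
  congr 1 <;> ring

lemma Lker_eq_zero_of_lt (hq0 : 0 < q) (hq1 : q < 1) (h2 : 0 ≤ τ₂) (h21 : τ₂ < τ₁)
    (h1 : τ₁ < 1 - Real.sqrt q) (hj : n k < j) : Lker q p n m a τ₁ τ₂ k i j = 0 := by
  rcases eq_or_ne k 0 with rfl | hk
  · exact if_pos rfl
  rw [Lker_eq hk, Gdouble_eq_zero_of_nonpos hq0.le h2 h21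
    (h1.trans (one_sub_sqrt_lt hq0 hq1)) _ _ _ (by omega) _ _, mul_zero]

lemma Lker_eq_Bker (hq0 : 0 < q) (hq1 : q < 1) (h2 : 0 < τ₂) (h21 : τ₂ < τ₁)
    (h1 : τ₁ < 1 - Real.sqrt q) (hτ0 : 0 < τ) (hτ : τ < 1 - Real.sqrt q) (hk : k ≠ 0)
    (hi : i ≤ n k) :
    Lker q p n m a τ₁ τ₂ k i j = Bker q p n m a τ i j := by
  have hρ := one_sub_sqrt_lt hq0 hq1
  rw [Lker_eq hk, Gdouble_eq_cint_of_nonneg hq0 hq1 h2 h21 (h1.trans hρ) (by omega), Bker_eq,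
    cint_Gfun_eq_of_radius hq0.le h2 hτ0 ((h21.trans h1).trans hρ) (hτ.trans hρ)]
  congr 3 <;> ring

lemma Lker_eq_zero_of_rstar_eq (hq0 : 0 < q) (hq1 : q < 1) (h2 : 0 < τ₂) (h21 : τ₂ < τ₁)
    (h1 : τ₁ < 1 - Real.sqrt q) (hk : k ≠ 0) (hi : n k < i) (hr : rstar p n i = k) :
    Lker q p n m a τ₁ τ₂ k i j = 0 := by
  rw [Lker_eq hk, mOf, aOf, hr, sub_self, sub_self, Gdouble_zero_zero_eq_zero hq0.le h2 h21
    (h1.trans (one_sub_sqrt_lt hq0 hq1)) (by omega), mul_zero]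

lemma Bker_eq_zero_of_lt (hq0 : 0 < q) (hq1 : q < 1) (hτ0 : 0 ≤ τ) (hτ : τ < 1 - Real.sqrt q)
    (hij : i < j) : Bker q p n m a τ i j = 0 := by
  rw [Bker_eq, cint_Gfun_eq_zero hq0.le hτ0 (hτ.trans (one_sub_sqrt_lt hq0 hq1)) (by omega),
    mul_zero]

lemma Bker_eq_of_rstar_eq (hq1 : q < 1) (hτ0 : 0 < τ) (h : rstar p n i = rstar p n j) :
    Bker q p n m a τ i j = if i = j then 1 else 0 := by
  rw [Bker_eq, mOf, mOf, aOf, aOf, h, sub_self, sub_self, cint_Gfun_zero_zero hτ0]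
  by_cases hij : i = j
  · rw [if_pos (by omega), if_pos hij, inv_mul_cancel₀ (one_sub_sqrt_ne_zero hq1)]
  · rw [if_neg (by omega), if_neg hij, mul_zero]

end Kernels

section Blocks

variable {p : ℕ} {n : ℕ → ℕ} {r i : ℕ}

lemma blockIdx_eq_of_mem_block (hn : MonotoneOn n (Iic p)) (hrp : r ≤ p) (h1 : n (r - 1) < i)
    (h2 : i ≤ n r) : blockIdx n i = r := by
  refine le_antisymm (Nat.sInf_le h2) (le_of_not_gt fun hlt => ?_)
  have hmem : i ≤ n (blockIdx n i) := Nat.sInf_mem (s := {r | i ≤ n r}) ⟨r, h2⟩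
  have := hn (mem_Iic.mpr (by omega)) (mem_Iic.mpr (by omega)) (show blockIdx n i ≤ r - 1 by omega)
  omega

lemma rstar_eq_of_mem_block (hn : MonotoneOn n (Iic p)) (hrp : r ≤ p) (h1 : n (r - 1) < i)
    (h2 : i ≤ n r) : rstar p n i = min r (p - 1) := by
  rw [rstar, blockIdx_eq_of_mem_block hn hrp h1 h2]

lemma rstar_eq_of_mem_last_block (hn : MonotoneOn n (Iic p)) {k : ℕ} (hk : p - 1 = k) (h1 : n k < i)
    (h2 : i ≤ n p) : rstar p n i = k := by
  subst hk
  rw [rstar_eq_of_mem_block hn le_rfl h1 h2]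
  omega

end Blocks

/-- The properties of the kernels `k ↦ L_k(i,j)` and `B(i,j)`, for fixed `i` and `j`, from which
the recursion for `L_k − L_{k−1}` follows by bookkeeping alone. -/
structure KernelFacts (p : ℕ) (n : ℕ → ℕ) (i j : ℕ) (L : ℕ → ℂ) (B : ℂ) : Prop where
  L_eq_zero_of_lt : ∀ k, n k < j → L k = 0
  L_eq_B : ∀ k, k ≠ 0 → i ≤ n k → L k = B
  L_eq_zero_of_rstar_eq : ∀ k, k ≠ 0 → n k < i → rstar p n i = k → L k = 0
  B_eq_zero_of_lt : i < j → B = 0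
  B_eq_of_rstar_eq : rstar p n i = rstar p n j → B = if i = j then 1 else 0

/-- The right-hand side of the identity, for `L k = L_k(i,j)` and `B = B(i,j)`. -/
def lkJump (p : ℕ) (n : ℕ → ℕ) (L : ℕ → ℂ) (B : ℂ) (k i j : ℕ) : ℂ :=
  (if (n (k - 1) < i ∧ i ≤ n k) ∧ (n (k - 1) < j ∧ j ≤ n k) ∧ i = j then 1 else 0)
    + (if (n (k - 1) < i ∧ i ≤ n k) ∧ j ≤ n (min (k - 1) (p - 2)) then 1 else 0) * B
    + (if n k < i ∧ j ≤ n k ∧ k ≤ p - 2 then 1 else 0) * L k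
    - (if n (k - 1) < i ∧ j ≤ n (k - 1) ∧ k ≤ p - 1 then 1 else 0) * L (k - 1)

namespace KernelFacts

variable {p : ℕ} {n : ℕ → ℕ} {i j k : ℕ} {L : ℕ → ℂ} {B : ℂ}

lemma sub_eq_of_lt (h : KernelFacts p n i j L B) (hn : MonotoneOn n (Iic p)) (hkp : k ≤ p)
    (hj : n k < j) : L k - L (k - 1) = lkJump p n L B k i j := by
  have h₁ : n (k - 1) ≤ n k := hn (mem_Iic.mpr (by omega)) (mem_Iic.mpr hkp) (by omega)
  have h₂ : n (min (k - 1) (p - 2)) ≤ n k :=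
    hn (mem_Iic.mpr (by omega)) (mem_Iic.mpr hkp) (by omega)
  rw [lkJump, h.L_eq_zero_of_lt k hj, h.L_eq_zero_of_lt (k - 1) (by omega)]
  split_ifs <;> first | omega | ring

lemma sub_eq_of_mem_block (h : KernelFacts p n i j L B) (hn : MonotoneOn n (Iic p))
    (hk1 : 1 ≤ k) (hkp : k ≤ p) (hiN : i ≤ n p) (hj1 : n (k - 1) < j) (hj2 : j ≤ n k) :
    L k - L (k - 1) = lkJump p n L B k i j := by
  have hL' : L (k - 1) = 0 := h.L_eq_zero_of_lt (k - 1) hj1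
  have h₁ : n (min (k - 1) (p - 2)) ≤ n (k - 1) :=
    hn (mem_Iic.mpr (by omega)) (mem_Iic.mpr (by omega)) (by omega)
  rcases le_or_gt i (n (k - 1)) with hi | hi
  · have hLk : L k = 0 := (h.L_eq_B k (by omega) (by omega)).trans (h.B_eq_zero_of_lt (by omega))
    rw [lkJump, hLk, hL']
    split_ifs <;> first | omega | ring
  rcases le_or_gt i (n k) with hi' | hi'
  · have hr : rstar p n i = rstar p n j := by
      rw [rstar_eq_of_mem_block hn hkp hi hi', rstar_eq_of_mem_block hn hkp hj1 hj2]
    rw [lkJump, h.L_eq_B k (by omega) hi', h.B_eq_of_rstar_eq hr, hL']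
    split_ifs <;> first | omega | ring
  have hkp' : k < p := hkp.lt_of_ne (by rintro rfl; omega)
  rcases le_or_gt k (p - 2) with hk2 | hk2
  · rw [lkJump, hL']
    split_ifs <;> first | omega | ring
  · rw [lkJump, hL', h.L_eq_zero_of_rstar_eq k (by omega) hi'
      (rstar_eq_of_mem_last_block hn (by omega) hi' hiN)]
    split_ifs <;> first | omega | ring

lemma sub_eq_of_le (h : KernelFacts p n i j L B) (hn : MonotoneOn n (Iic p)) (hn0 : n 0 = 0)
    (hk1 : 1 ≤ k) (hkp : k ≤ p) (hiN : i ≤ n p) (hj0 : 1 ≤ j) (hj : j ≤ n (k - 1)) :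
    L k - L (k - 1) = lkJump p n L B k i j := by
  have hk2 : 2 ≤ k := by
    by_contra hk2
    rw [show k - 1 = 0 by omega, hn0] at hj
    omega
  have h₁ : n (k - 1) ≤ n k := hn (mem_Iic.mpr (by omega)) (mem_Iic.mpr hkp) (by omega)
  rcases le_or_gt i (n (k - 1)) with hi | hi
  · rw [lkJump, h.L_eq_B k (by omega) (hi.trans h₁), h.L_eq_B (k - 1) (by omega) hi]
    split_ifs <;> first | omega | ring
  rcases le_or_gt i (n k) with hi' | hi'
  · rw [lkJump, h.L_eq_B k (by omega) hi']
    rcases le_or_gt k (p - 1) with hkp1 | hkp1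
    · rw [show min (k - 1) (p - 2) = k - 1 by omega]
      split_ifs <;> first | omega | ring
    obtain rfl : k = p := by omega
    rw [h.L_eq_zero_of_rstar_eq _ (by omega) hi (rstar_eq_of_mem_last_block hn rfl hi hi'),
      show min (k - 1) (k - 2) = k - 2 by omega]
    rcases le_or_gt j (n (k - 2)) with hj2 | hj2
    · split_ifs <;> first | omega | ring
    have hr : rstar k n i = rstar k n j := by
      rw [rstar_eq_of_mem_last_block hn rfl hi hi',
        rstar_eq_of_mem_block hn (r := k - 1) (by omega)
          (by rwa [show k - 1 - 1 = k - 2 by omega]) hj,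
        min_self]
    rw [h.B_eq_of_rstar_eq hr]
    split_ifs <;> first | omega | ring
  have hkp' : k < p := hkp.lt_of_ne (by rintro rfl; omega)
  rcases le_or_gt k (p - 2) with hk2 | hk2
  · rw [lkJump]
    split_ifs <;> first | omega | ring
  · rw [lkJump, h.L_eq_zero_of_rstar_eq k (by omega) hi'
      (rstar_eq_of_mem_last_block hn (by omega) hi' hiN)]
    split_ifs <;> first | omega | ring

lemma sub_eq (h : KernelFacts p n i j L B) (hn : MonotoneOn n (Iic p)) (hn0 : n 0 = 0)
    (hk1 : 1 ≤ k) (hkp : k ≤ p) (hiN : i ≤ n p) (hj0 : 1 ≤ j) :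
    L k - L (k - 1) = lkJump p n L B k i j := by
  rcases lt_or_ge (n k) j with hj | hj
  · exact h.sub_eq_of_lt hn hkp hj
  rcases lt_or_ge (n (k - 1)) j with hj' | hj'
  · exact h.sub_eq_of_mem_block hn hk1 hkp hiN hj' hj
  · exact h.sub_eq_of_le hn hn0 hk1 hkp hiN hj0 hj'

end KernelFacts

lemma kernelFacts_Lker_Bker {q : ℝ} {p : ℕ} {n m : ℕ → ℕ} {a : ℕ → ℤ} {τ₁ τ₂ τ : ℝ}
    (hq0 : 0 < q) (hq1 : q < 1) (h2 : 0 < τ₂) (h21 : τ₂ < τ₁) (h1 : τ₁ < 1 - Real.sqrt q)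
    (hτ0 : 0 < τ) (hτ : τ < 1 - Real.sqrt q) (i j : ℕ) :
    KernelFacts p n i j (fun k => Lker q p n m a τ₁ τ₂ k i j) (Bker q p n m a τ i j) where
  L_eq_zero_of_lt _ := Lker_eq_zero_of_lt hq0 hq1 h2.le h21 h1
  L_eq_B _ := Lker_eq_Bker hq0 hq1 h2 h21 h1 hτ0 hτ
  L_eq_zero_of_rstar_eq _ := Lker_eq_zero_of_rstar_eq hq0 hq1 h2 h21 h1
  B_eq_zero_of_lt := Bker_eq_zero_of_lt hq0 hq1 hτ0.le hτ
  B_eq_of_rstar_eq := Bker_eq_of_rstar_eq hq1 hτ0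

theorem statement15_general
    (q : ℝ) (hq0 : 0 < q) (hq1 : q < 1)
    (p N : ℕ)
    (n : ℕ → ℕ) (hn0 : n 0 = 0) (hn1 : 1 ≤ n 1)
    (hnmono : ∀ k ∈ Finset.Icc 1 (p - 1), n k < n (k + 1)) (hnp : n p = N)
    (m : ℕ → ℕ)
    (a : ℕ → ℤ)
    (τ1 τ2 τ : ℝ) (hτ2 : 0 < τ2) (hτ21 : τ2 < τ1) (hτ1 : τ1 < 1 - Real.sqrt q)
    (hτ0 : 0 < τ) (hτ : τ < 1 - Real.sqrt q) :
    ∀ k ∈ Finset.Icc 1 p, ∀ i j : ℕ, 1 ≤ i → i ≤ N → 1 ≤ j → j ≤ N →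
      Lker q p n m a τ1 τ2 k i j - Lker q p n m a τ1 τ2 (k - 1) i j
        = (if (n (k - 1) < i ∧ i ≤ n k) ∧ (n (k - 1) < j ∧ j ≤ n k) ∧ i = j
            then 1 else 0)
          + (if (n (k - 1) < i ∧ i ≤ n k) ∧ j ≤ n (min (k - 1) (p - 2))
              then 1 else 0) * Bker q p n m a τ i j
          + (if n k < i ∧ j ≤ n k ∧ k ≤ p - 2 then 1 else 0)
              * Lker q p n m a τ1 τ2 k i j
          - (if n (k - 1) < i ∧ j ≤ n (k - 1) ∧ k ≤ p - 1 then 1 else 0)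
              * Lker q p n m a τ1 τ2 (k - 1) i j := by
  intro k hk i j _ hiN hj _
  obtain ⟨hk1, hkp⟩ := Finset.mem_Icc.mp hk
  have hn : StrictMonoOn n (Iic p) := strictMonoOn_Iic_of_lt_succ fun r hr => by
    rw [Order.succ_eq_add_one]
    rcases Nat.eq_zero_or_pos r with rfl | hr0
    · rwa [hn0, zero_add]
    · exact hnmono r (Finset.mem_Icc.mpr ⟨hr0, by omega⟩)
  exact (kernelFacts_Lker_Bker hq0 hq1 hτ2 hτ21 hτ1 hτ0 hτ i j).sub_eq hn.monotoneOn hn0 hk1 hkp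
    (hnp ▸ hiN) hj

/-- (Lemma `lem:Lkhelper` of the paper.)  The decomposition of
`L_k − L_{k−1}` into identity, `B`, and boundary `L`-pieces. -/
theorem statement15
    (q : ℝ) (hq0 : 0 < q) (hq1 : q < 1)
    (p N : ℕ) (hp : 2 ≤ p)
    (n : ℕ → ℕ) (hn0 : n 0 = 0) (hn1 : 1 ≤ n 1)
    (hnmono : ∀ k ∈ Finset.Icc 1 (p - 1), n k < n (k + 1)) (hnp : n p = N)
    (m : ℕ → ℕ) (hm0 : m 0 = 0) (hm1 : 0 < m 1)
    (hmmono : ∀ k ∈ Finset.Icc 1 (p - 1), m k < m (k + 1))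
    (a : ℕ → ℤ) (ha0 : a 0 = 0)
    (τ1 τ2 τ : ℝ) (hτ2 : 0 < τ2) (hτ21 : τ2 < τ1) (hτ1 : τ1 < 1 - Real.sqrt q)
    (hτ0 : 0 < τ) (hτ : τ < 1 - Real.sqrt q) :
    ∀ k ∈ Finset.Icc 1 p, ∀ i j : ℕ, 1 ≤ i → i ≤ N → 1 ≤ j → j ≤ N →
      Lker q p n m a τ1 τ2 k i j - Lker q p n m a τ1 τ2 (k - 1) i j
        = (if (n (k - 1) < i ∧ i ≤ n k) ∧ (n (k - 1) < j ∧ j ≤ n k) ∧ i = j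
            then 1 else 0)
          + (if (n (k - 1) < i ∧ i ≤ n k) ∧ j ≤ n (min (k - 1) (p - 2))
              then 1 else 0) * Bker q p n m a τ i j
          + (if n k < i ∧ j ≤ n k ∧ k ≤ p - 2 then 1 else 0)
              * Lker q p n m a τ1 τ2 k i j
          - (if n (k - 1) < i ∧ j ≤ n (k - 1) ∧ k ≤ p - 1 then 1 else 0)
              * Lker q p n m a τ1 τ2 (k - 1) i j :=
  statement15_general q hq0 hq1 p N n hn0 hn1 hnmono hnp m a τ1 τ2 τ hτ2 hτ21 hτ1 hτ0 hτ
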